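/- arXiv:2103.00360 — 5 statements merged into one kernel-verified Lean document; each statement's English description precedes it below -/
import Mathlib

section
/- Performance difference lemma for Markov reward processes: let μ1 and μ2 be two Markov reward processes on state space [S'] with horizon H and common reward function r : [S']×[H] → ℝ. Define value functions by backward recursion V^{μi}_{H+1}(x) := 0 and V^{μi}_h(x) := r(x,h) + Σ_{x'} p_{μi}(x'|x,h)·V^{μi}_{h+1}(x'). Then E_{μ1}[Σ_{h=1}^H r(x_h,h)] − E_{μ2}[Σ_{h=1}^H r(x_h,h)] = Σ_x (p_{μ1}(x|0) − p_{μ2}(x|0))·V^{μ2}_1(x) + E_{μ1}[ Σ_{h=1}^H Σ_{x'} (p_{μ1}(x'|x_h,h) − p_{μ2}(x'|x_h,h))·V^{μ2}_{h+1}(x') ]. -/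
open Finset

noncomputable section

/-- A Markov reward process on state space `Fin S'` with horizon `H`: an initial-state
distribution and, for each state-stage pair, a transition distribution. -/
structure MRP (S' H : ℕ) where
  init : Fin S' → ℝ
  trans : Fin S' → Fin H → Fin S' → ℝ
  init_nonneg : ∀ x, 0 ≤ init x
  init_sum : ∑ x, init x = 1
  trans_nonneg : ∀ x h x', 0 ≤ trans x h x'
  trans_sum : ∀ x h, ∑ x', trans x h x' = 1

namespace MRP

variable {S' H : ℕ}

/-- Probability of the state sequence `t` under the MRP `μ`:
`x₁ ∼ init` and `x_{h+1} ∼ trans (x_h, h)`. -/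
def trajP (μ : MRP S' H) (t : Fin H → Fin S') : ℝ :=
  (if hH : 0 < H then μ.init (t ⟨0, hH⟩) else 1) *
    ∏ h : Fin H,
      (if hh : (h : ℕ) + 1 < H then μ.trans (t h) h (t ⟨(h : ℕ) + 1, hh⟩) else 1)

/-- Expectation of a functional of the state sequence. -/
def expect (μ : MRP S' H) (f : (Fin H → Fin S') → ℝ) : ℝ :=
  ∑ t : Fin H → Fin S', μ.trajP t * f t

/-- Value functions by backward recursion: `V_{H+1}(x) = 0` and
`V_h(x) = r(x,h) + Σ_{x'} p(x'|x,h)·V_{h+1}(x')` (here stages are 0-indexed). -/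
def Vfun (μ : MRP S' H) (r : Fin S' → Fin H → ℝ) (h : ℕ) (x : Fin S') : ℝ :=
  if hh : h < H then
    r x ⟨h, hh⟩ + ∑ x' : Fin S', μ.trans x ⟨h, hh⟩ x' * Vfun μ r (h + 1) x'
  else 0
termination_by H - h

end MRP

open MRP

namespace MRPaux

variable {S' : ℕ}

/-- Tail MRP after first step from `x`. -/
def tail {H : ℕ} (μ : MRP S' (H + 1)) (x : Fin S') : MRP S' H where
  init := μ.trans x 0
  trans y h := μ.trans y h.succ
  init_nonneg y := μ.trans_nonneg x 0 y
  init_sum := μ.trans_sum x 0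
  trans_nonneg y h := μ.trans_nonneg y h.succ
  trans_sum y h := μ.trans_sum y h.succ

theorem cons_mk_succ {H : ℕ} (x : Fin S') (s : Fin H → Fin S') (j : ℕ) (hj : j + 1 < H + 1) :
    (Fin.cons x s : Fin (H+1) → Fin S') ⟨j + 1, hj⟩ = s ⟨j, Nat.lt_of_succ_lt_succ hj⟩ := by
  have h : (⟨j + 1, hj⟩ : Fin (H+1)) = Fin.succ ⟨j, Nat.lt_of_succ_lt_succ hj⟩ := by
    ext; simp
  rw [h, Fin.cons_succ]

theorem trajP_cons {H : ℕ} (μ : MRP S' (H + 1)) (x : Fin S') (s : Fin H → Fin S') :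
    μ.trajP (Fin.cons x s) = μ.init x * (tail μ x).trajP s := by
  unfold MRP.trajP
  rw [Fin.prod_univ_succ, dif_pos (Nat.succ_pos H)]
  have h0 : (Fin.cons x s : Fin (H+1) → Fin S') ⟨0, Nat.succ_pos H⟩ = x := rfl
  rw [h0]
  congr 1
  congr 1
  · -- first transition factor vs tail init factor
    by_cases hH : 0 < H
    · rw [dif_pos (show ((0 : Fin (H+1)) : ℕ) + 1 < H + 1 by
        simp only [Fin.val_zero]; omega), dif_pos hH]
      simp [cons_mk_succ, tail]
    · rw [dif_neg (show ¬(((0 : Fin (H+1)) : ℕ) + 1 < H + 1) by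
        simp only [Fin.val_zero]; omega), dif_neg hH]
  · apply Finset.prod_congr rfl
    intro h _
    by_cases hh : (h : ℕ) + 1 < H
    · rw [dif_pos (show ((Fin.succ h : Fin (H+1)) : ℕ) + 1 < H + 1 by
        simp only [Fin.val_succ]; omega), dif_pos hh]
      simp [cons_mk_succ, tail]
    · rw [dif_neg (show ¬(((Fin.succ h : Fin (H+1)) : ℕ) + 1 < H + 1) by
        simp only [Fin.val_succ]; omega), dif_neg hh]

theorem trajP_sum : ∀ {H : ℕ} (μ : MRP S' H), ∑ t : Fin H → Fin S', μ.trajP t = 1 := by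
  intro H
  induction H with
  | zero =>
    intro μ
    rw [Fintype.sum_eq_single (fun i : Fin 0 => i.elim0)]
    · simp [MRP.trajP]
    · intro t ht; exact absurd (funext fun i => i.elim0) ht
  | succ H ih =>
    intro μ
    rw [← Equiv.sum_comp (Fin.consEquiv fun _ : Fin (H+1) => Fin S'), Fintype.sum_prod_type]
    have key : ∀ x s, μ.trajP ((Fin.consEquiv fun _ : Fin (H+1) => Fin S') (x, s))
        = μ.init x * (tail μ x).trajP s := fun x s => trajP_cons μ x s
    simp only [key]
    rw [Finset.sum_congr rfl fun x _ => (Finset.mul_sum _ _ _).symm]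
    simp only [ih]
    simpa using μ.init_sum

theorem Vfun_tail {H : ℕ} (μ : MRP S' (H + 1)) (x : Fin S') (g : Fin S' → Fin (H+1) → ℝ) :
    ∀ (d h : ℕ), H - h ≤ d → ∀ y,
      Vfun (tail μ x) (fun z k => g z k.succ) h y = Vfun μ g (h + 1) y := by
  intro d
  induction d with
  | zero =>
    intro h hd y
    rw [Vfun, Vfun, dif_neg (by omega), dif_neg (by omega)]
  | succ d ihd =>
    intro h hd y
    by_cases hh : h < H
    · rw [Vfun, Vfun, dif_pos hh, dif_pos (show h + 1 < H + 1 by omega)]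
      have hsucc : (Fin.succ ⟨h, hh⟩ : Fin (H+1)) = ⟨h + 1, by omega⟩ := rfl
      rw [hsucc]
      congr 1
      apply Finset.sum_congr rfl
      intro y' _
      rw [ihd (h+1) (by omega) y']
      rfl
    · rw [Vfun, Vfun, dif_neg (by omega), dif_neg (by omega)]

theorem expect_sum_eq : ∀ {H : ℕ} (μ : MRP S' H) (g : Fin S' → Fin H → ℝ),
    μ.expect (fun t => ∑ h : Fin H, g (t h) h) = ∑ x, μ.init x * Vfun μ g 0 x := by
  intro H
  induction H with
  | zero =>
    intro μ g
    simp [MRP.expect, Vfun]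
  | succ H ih =>
    intro μ g
    have ihx : ∀ x : Fin S', (tail μ x).expect (fun t => ∑ h : Fin H, g (t h) h.succ)
        = ∑ y, (tail μ x).init y * Vfun (tail μ x) (fun z k => g z k.succ) 0 y := by
      intro x
      have h := ih (tail μ x) (fun z k => g z k.succ)
      beta_reduce at h
      exact h
    unfold MRP.expect at ihx ⊢
    rw [← Equiv.sum_comp (Fin.consEquiv fun _ : Fin (H+1) => Fin S'), Fintype.sum_prod_type]
    have key : ∀ (x : Fin S') (s : Fin H → Fin S'),
        μ.trajP ((Fin.consEquiv fun _ : Fin (H+1) => Fin S') (x, s)) *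
          (∑ h : Fin (H+1), g (((Fin.consEquiv fun _ : Fin (H+1) => Fin S') (x, s)) h) h)
        = μ.init x * ((tail μ x).trajP s * (g x 0 + ∑ h : Fin H, g (s h) h.succ)) := by
      intro x s
      have h1 : μ.trajP ((Fin.consEquiv fun _ : Fin (H+1) => Fin S') (x, s))
          = μ.init x * (tail μ x).trajP s := trajP_cons μ x s
      have h2 : (∑ h : Fin (H+1), g (((Fin.consEquiv fun _ : Fin (H+1) => Fin S') (x, s)) h) h)
          = g x 0 + ∑ h : Fin H, g (s h) h.succ := by
        rw [Fin.sum_univ_succ]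
        simp [Fin.consEquiv]
      rw [h1, h2]
      ring
    simp only [key]
    have step : ∀ x : Fin S',
        (∑ s : Fin H → Fin S', μ.init x * ((tail μ x).trajP s *
            (g x 0 + ∑ h : Fin H, g (s h) h.succ)))
        = μ.init x * Vfun μ g 0 x := by
      intro x
      rw [← Finset.mul_sum]
      congr 1
      have expand : (∑ s : Fin H → Fin S', (tail μ x).trajP s *
            (g x 0 + ∑ h : Fin H, g (s h) h.succ))
          = g x 0 * (∑ s : Fin H → Fin S', (tail μ x).trajP s)
            + ∑ s : Fin H → Fin S', (tail μ x).trajP s * (∑ h : Fin H, g (s h) h.succ) := by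
        rw [Finset.mul_sum, ← Finset.sum_add_distrib]
        exact Finset.sum_congr rfl fun s _ => by ring
      rw [expand, trajP_sum, mul_one, ihx x]
      have vt : ∀ y, Vfun (tail μ x) (fun z k => g z k.succ) 0 y = Vfun μ g 1 y :=
        fun y => Vfun_tail μ x g H 0 (by omega) y
      rw [Finset.sum_congr rfl fun y _ => by rw [vt y]]
      rw [Vfun, dif_pos (Nat.succ_pos H)]
      rfl
    exact Finset.sum_congr rfl fun x _ => step x

theorem Vfun_diff {H : ℕ} (μ1 μ2 : MRP S' H) (r : Fin S' → Fin H → ℝ) :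
    ∀ (d h : ℕ), H - h ≤ d → ∀ x,
      Vfun μ1 r h x = Vfun μ2 r h x +
        Vfun μ1 (fun z k => ∑ x' : Fin S',
          (μ1.trans z k x' - μ2.trans z k x') * Vfun μ2 r ((k : ℕ) + 1) x') h x := by
  intro d
  induction d with
  | zero =>
    intro h hd x
    rw [Vfun, Vfun, Vfun, dif_neg (by omega), dif_neg (by omega), dif_neg (by omega)]
    ring
  | succ d ihd =>
    intro h hd x
    by_cases hh : h < H
    · rw [Vfun, Vfun, Vfun, dif_pos hh, dif_pos hh, dif_pos hh]
      have hrec : ∀ x', Vfun μ1 r (h+1) x' = Vfun μ2 r (h+1) x' +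
          Vfun μ1 (fun z k => ∑ x' : Fin S',
            (μ1.trans z k x' - μ2.trans z k x') * Vfun μ2 r ((k : ℕ) + 1) x') (h+1) x' :=
        fun x' => ihd (h+1) (by omega) x'
      simp only [hrec]
      show r x ⟨h, hh⟩ + ∑ x' : Fin S', μ1.trans x ⟨h, hh⟩ x' *
            (Vfun μ2 r (h+1) x' + Vfun μ1 _ (h+1) x')
          = (r x ⟨h, hh⟩ + ∑ x' : Fin S', μ2.trans x ⟨h, hh⟩ x' * Vfun μ2 r (h+1) x') +
            ((∑ x' : Fin S', (μ1.trans x ⟨h, hh⟩ x' - μ2.trans x ⟨h, hh⟩ x') *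
                Vfun μ2 r (h+1) x') +
              ∑ x' : Fin S', μ1.trans x ⟨h, hh⟩ x' * Vfun μ1 _ (h+1) x')
      simp only [mul_add, sub_mul, Finset.sum_add_distrib, Finset.sum_sub_distrib]
      ring
    · rw [Vfun, Vfun, Vfun, dif_neg (by omega), dif_neg (by omega), dif_neg (by omega)]
      ring

end MRPaux

open MRPaux

/-- **Performance difference lemma for Markov reward processes.** For two MRPs `μ1, μ2` with a
common reward function `r`,
`E_{μ1}[Σ_h r(x_h,h)] − E_{μ2}[Σ_h r(x_h,h)]
  = Σ_x (p_{μ1}(x|0) − p_{μ2}(x|0))·V^{μ2}_1(x)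
    + E_{μ1}[Σ_h Σ_{x'} (p_{μ1}(x'|x_h,h) − p_{μ2}(x'|x_h,h))·V^{μ2}_{h+1}(x')]`. -/
theorem performance_difference (S' H : ℕ) (μ1 μ2 : MRP S' H) (r : Fin S' → Fin H → ℝ) :
    μ1.expect (fun t => ∑ h : Fin H, r (t h) h) -
      μ2.expect (fun t => ∑ h : Fin H, r (t h) h)
    = (∑ x : Fin S', (μ1.init x - μ2.init x) * Vfun μ2 r 0 x) +
      μ1.expect (fun t => ∑ h : Fin H, ∑ x' : Fin S',
        (μ1.trans (t h) h x' - μ2.trans (t h) h x') * Vfun μ2 r ((h : ℕ) + 1) x') := by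
  have e1 := expect_sum_eq μ1 r
  have e2 := expect_sum_eq μ2 r
  have e3 : μ1.expect (fun t => ∑ h : Fin H, ∑ x' : Fin S',
        (μ1.trans (t h) h x' - μ2.trans (t h) h x') * Vfun μ2 r ((h : ℕ) + 1) x')
      = ∑ x, μ1.init x * Vfun μ1 (fun z k => ∑ x' : Fin S',
          (μ1.trans z k x' - μ2.trans z k x') * Vfun μ2 r ((k : ℕ) + 1) x') 0 x := by
    have h := expect_sum_eq μ1 (fun z k => ∑ x' : Fin S',
      (μ1.trans z k x' - μ2.trans z k x') * Vfun μ2 r ((k : ℕ) + 1) x')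
    beta_reduce at h
    exact h
  rw [e1, e2, e3]
  have hB : ∀ x, Vfun μ1 r 0 x = Vfun μ2 r 0 x +
      Vfun μ1 (fun z k => ∑ x' : Fin S',
        (μ1.trans z k x' - μ2.trans z k x') * Vfun μ2 r ((k : ℕ) + 1) x') 0 x :=
    fun x => Vfun_diff μ1 μ2 r H 0 (by omega) x
  rw [Finset.sum_congr rfl fun x _ => by rw [hB x]]
  simp only [sub_mul, mul_add, Finset.sum_add_distrib, Finset.sum_sub_distrib]
  ring
end
end

section
/- Let μ and μ* be deterministic MDP models with the same initial state, let U ⊆ [S]×[A]×[H], and suppose f_μ(x,a,h) = f_{μ*}(x,a,h) and r_μ(x,a,h) ≤ ε for every (x,a,h) ∈ U^c. Then: (i) if the trajectory of π under μ* never visits a triple of U, then V(π,μ) ≤ H·ε; (ii) if h ∈ [H] is the first stage at which the trajectory of π under μ* visits a triple of U, then V(π,μ) ≥ r_μ(x_h^{π;μ*}, a_h^{π;μ*}, h). -/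
open Finset

noncomputable section

/-- A deterministic MDP model with `S` states, `A` actions and horizon `H`: a fixed initial
state, a deterministic transition function, and rewards in `[0,1]`. -/
structure DetMDP (S A H : ℕ) where
  x1 : Fin S
  f : Fin S → Fin A → Fin H → Fin S
  reward : Fin S → Fin A → Fin H → ℝ
  reward_nonneg : ∀ x a h, 0 ≤ reward x a h
  reward_le_one : ∀ x a h, reward x a h ≤ 1

/-- A (deterministic Markovian) policy. -/
abbrev Policy (S A H : ℕ) := Fin S → Fin H → Fin A

namespace DetMDP

variable {S A H : ℕ}

/-- The state visited at (0-indexed) stage `n` by the trajectory of policy `π` under `μ`. -/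
def state (μ : DetMDP S A H) (π : Policy S A H) : ℕ → Fin S
  | 0 => μ.x1
  | n + 1 =>
    if hn : n < H then
      μ.f (state μ π n) (π (state μ π n) ⟨n, hn⟩) ⟨n, hn⟩
    else state μ π n

/-- The action selected at stage `h` by policy `π` under `μ`. -/
def action (μ : DetMDP S A H) (π : Policy S A H) (h : Fin H) : Fin A :=
  π (state μ π h) h

/-- The value of policy `π` under `μ`: the total reward along its trajectory. -/
def value (μ : DetMDP S A H) (π : Policy S A H) : ℝ :=
  ∑ h : Fin H, μ.reward (state μ π h) (action μ π h) h

/-- `firstVisit μ* π U` is the 0-indexed first stage at which the trajectory of `π` under `μ*`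
visits a triple of `U`, and `H` if it never does (so the paper's 1-indexed
`h_π ∈ {1,…,H+1}` equals `firstVisit + 1`). -/
def firstVisit (μ : DetMDP S A H) (π : Policy S A H)
    (U : Finset (Fin S × Fin A × Fin H)) : ℕ :=
  sInf ({n : ℕ | ∃ hn : n < H,
    (state μ π n, π (state μ π n) ⟨n, hn⟩, (⟨n, hn⟩ : Fin H)) ∈ U} ∪ {H})

end DetMDP

open DetMDP

/-- Let `μ` and `μ*` be deterministic models with the same initial state, with
`f_μ = f_{μ*}` on `Uᶜ` and `r_μ ≤ ε` on `Uᶜ`. Then: (i) if the trajectory of `π` under `μ*`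
never visits a triple of `U`, then `V(π,μ) ≤ H·ε`; (ii) if `h` is the first stage at which the
trajectory of `π` under `μ*` visits a triple of `U`, then
`V(π,μ) ≥ r_μ(x_h^{π;μ*}, a_h^{π;μ*}, h)`. -/
theorem det_value_bounds (S A H : ℕ) (U : Finset (Fin S × Fin A × Fin H)) (ε : ℝ)
    (μ μstar : DetMDP S A H) (hinit : μ.x1 = μstar.x1)
    (hf : ∀ x a h, (x, a, h) ∉ U → μ.f x a h = μstar.f x a h)
    (hr : ∀ x a h, (x, a, h) ∉ U → μ.reward x a h ≤ ε)
    (π : Policy S A H) :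
    ((∀ h : Fin H, (state μstar π h, action μstar π h, h) ∉ U) →
      value μ π ≤ (H : ℝ) * ε) ∧
    (∀ h : Fin H, (state μstar π h, action μstar π h, h) ∈ U →
      (∀ τ : Fin H, τ < h → (state μstar π τ, action μstar π τ, τ) ∉ U) →
      μ.reward (state μstar π h) (action μstar π h) h ≤ value μ π) := by
  have key : ∀ n : ℕ, (∀ τ : Fin H, (τ : ℕ) < n →
      (state μstar π τ, action μstar π τ, τ) ∉ U) → state μ π n = state μstar π n := by
    intro n
    induction n with
    | zero => intro _; simpa [state] using hinit
    | succ m ih =>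
      intro hno
      have hprev : state μ π m = state μstar π m :=
        ih (fun τ hτ => hno τ (Nat.lt_succ_of_lt hτ))
      by_cases hm : m < H
      · have hmem := hno ⟨m, hm⟩ (Nat.lt_succ_self m)
        simp only [state, dif_pos hm, hprev]
        exact hf _ _ _ (by simpa [action, state] using hmem)
      · simp [state, dif_neg hm, hprev]
  constructor
  · intro hall
    have hterm : ∀ h : Fin H, μ.reward (state μ π h) (action μ π h) h ≤ ε := by
      intro h
      have hs : state μ π h = state μstar π h := by
        refine key h (fun τ hτ => hall τ)
      have ha : action μ π h = action μstar π h := by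
        simp [action, hs]
      rw [hs, ha]
      exact hr _ _ _ (hall h)
    calc value μ π ≤ ∑ _h : Fin H, ε := Finset.sum_le_sum (fun h _ => hterm h)
      _ = (H : ℝ) * ε := by simp [mul_comm]
  · intro h hmem hfirst
    have hs : state μ π h = state μstar π h := by
      refine key h (fun τ hτ => hfirst τ ?_)
      exact hτ
    have ha : action μ π h = action μstar π h := by simp [action, hs]
    have := Finset.single_le_sum
      (f := fun h : Fin H => μ.reward (state μ π h) (action μ π h) h)
      (fun i _ => μ.reward_nonneg _ _ _) (Finset.mem_univ h)
    simpa [value, hs, ha] using this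
end
end

section
/- Hidden-hallucination incentive step: let (Ω,𝓕,P) be a probability space carrying a random tabular MDP model μ*, an event A with P(A) > 0, and a {0,1}-valued random variable Z with P(A ∩ {Z=0}) > 0; set p := P(Z=1 | A). Let Π be a nonempty subset of the (finite) set Π_mkv of all policies with Π ≠ Π_mkv, and suppose g > 0 satisfies max_{π ∈ Π} E[V(π,μ*) | A, Z=0] − max_{π ∈ Π_mkv∖Π} E[V(π,μ*) | A, Z=0] ≥ g. If p < g/(2H), then every maximizer over Π_mkv of π ↦ E[V(π,μ*) | A] lies in Π. -/
open Finset

noncomputable section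

/-- A tabular MDP model with `S` states, `A` actions and horizon `H`:
an initial-state distribution, transition distributions for every triple `(x,a,h)`,
and mean rewards in `[0,1]`. -/
structure MDPModel (S A H : ℕ) where
  init : Fin S → ℝ
  trans : Fin S → Fin A → Fin H → Fin S → ℝ
  reward : Fin S → Fin A → Fin H → ℝ
  init_nonneg : ∀ x, 0 ≤ init x
  init_sum : ∑ x, init x = 1
  trans_nonneg : ∀ x a h x', 0 ≤ trans x a h x'
  trans_sum : ∀ x a h, ∑ x', trans x a h x' = 1
  reward_nonneg : ∀ x a h, 0 ≤ reward x a h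
  reward_le_one : ∀ x a h, reward x a h ≤ 1

namespace MDPModel

variable {S A H : ℕ}

/-- Probability of the state trajectory `t` under model `μ` and policy `π`:
`x₁ ∼ init`, `a_h = π (x_h, h)`, `x_{h+1} ∼ trans (x_h, a_h, h)`. -/
def trajP (μ : MDPModel S A H) (π : Policy S A H) (t : Fin H → Fin S) : ℝ :=
  (if hH : 0 < H then μ.init (t ⟨0, hH⟩) else 1) *
    ∏ h : Fin H,
      (if hh : (h : ℕ) + 1 < H then
        μ.trans (t h) (π (t h) h) h (t ⟨(h : ℕ) + 1, hh⟩) else 1)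

/-- Expectation of a trajectory functional under `P^π_μ`. -/
def expect (μ : MDPModel S A H) (π : Policy S A H) (f : (Fin H → Fin S) → ℝ) : ℝ :=
  ∑ t : Fin H → Fin S, μ.trajP π t * f t

/-- Probability of a trajectory event under `P^π_μ`. -/
def probEvent (μ : MDPModel S A H) (π : Policy S A H) (E : (Fin H → Fin S) → Prop) : ℝ :=
  ∑ t : Fin H → Fin S, Set.indicator {t' | E t'} (μ.trajP π) t

/-- ℓ1 distance between two functions on `Fin S`. -/
def l1 (p q : Fin S → ℝ) : ℝ := ∑ x, |p x - q x|

/-- Two models are `ε`-similar on `Uᶜ`: the initial-state distributions are `ε`-close in ℓ1,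
and so are the transition distributions at every triple outside `U`. -/
def SimilarOn (μ ν : MDPModel S A H) (U : Finset (Fin S × Fin A × Fin H)) (ε : ℝ) : Prop :=
  l1 μ.init ν.init ≤ ε ∧
    ∀ x a h, (x, a, h) ∉ U → l1 (μ.trans x a h) (ν.trans x a h) ≤ ε

/-- The event `E_h`: all triples visited before stage `h` lie outside `U`. -/
def preOutside (π : Policy S A H) (U : Finset (Fin S × Fin A × Fin H))
    (t : Fin H → Fin S) (h : Fin H) : Prop :=
  ∀ τ : Fin H, τ < h → (t τ, π (t τ) τ, τ) ∉ U

/-- The event `E_U`: the trajectory visits some triple in `U`. -/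
def visits (π : Policy S A H) (U : Finset (Fin S × Fin A × Fin H))
    (t : Fin H → Fin S) : Prop :=
  ∃ h : Fin H, (t h, π (t h) h, h) ∈ U

/-- The value of policy `π` under model `μ`. -/
def value (μ : MDPModel S A H) (π : Policy S A H) : ℝ :=
  μ.expect π (fun t => ∑ h : Fin H, μ.reward (t h) (π (t h) h) h)

/-- A model is `ε`-punished on `Uᶜ`: mean rewards outside `U` are at most `ε`. -/
def PunishedOn (μ : MDPModel S A H) (U : Finset (Fin S × Fin A × Fin H)) (ε : ℝ) : Prop :=
  ∀ x a h, (x, a, h) ∉ U → μ.reward x a h ≤ ε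

/-- `ω*^π(x,a,h)`: the probability under `μ*` that the trajectory is at `(x,a)` at stage `h`
having visited only triples outside `U` before stage `h`. -/
def omegaStar (μstar : MDPModel S A H) (π : Policy S A H)
    (U : Finset (Fin S × Fin A × Fin H)) (x : Fin S) (a : Fin A) (h : Fin H) : ℝ :=
  μstar.probEvent π (fun t => t h = x ∧ π (t h) h = a ∧ preOutside π U t h)

end MDPModel

open MDPModel

open MeasureTheory

/-- Conditional expectation of `f` given the event `A`: `E[f | A] = (∫_A f dP) / P(A)`. -/
def condExpOn {Ω : Type*} [MeasurableSpace Ω] (P : Measure Ω) (A : Set Ω) (f : Ω → ℝ) : ℝ :=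
  (∫ ω in A, f ω ∂P) / (P A).toReal


/-! Split `A` along `T = {Z = 0}`. On `A ∩ T` the best policy of `Π` leads every policy outside
`Π` by `g` in conditional mean, which is worth `g · P(A ∩ T)` in `∫_A V`; on `A \ T` values lie in
`[0, H]`, so a policy outside `Π` can make up at most `H · P(A \ T)` there. From `p < g / (2H)` and
`g ≤ H` one gets `H · P(A \ T) < g · P(A ∩ T)`, so no policy outside `Π` maximizes `E[V | A]`. -/
theorem sum_prod_markovChain {S : Type*} [Fintype S] :
    ∀ (n : ℕ) (p₀ : S → ℝ) (K : Fin n → S → S → ℝ), ∑ x, p₀ x = 1 → (∀ h x, ∑ y, K h x y = 1) →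
    ∑ t : Fin (n + 1) → S, p₀ (t 0) * ∏ h : Fin n, K h (t h.castSucc) (t h.succ) = 1
  | 0, p₀, K, h₀, _ => by
    simpa using (Fintype.sum_equiv (Equiv.funUnique (Fin 1) S) _ _ fun _ => rfl).trans h₀
  | n + 1, p₀, K, h₀, hK => by
    rw [← (Fin.consEquiv fun _ => S).sum_comp, Fintype.sum_prod_type]
    simp only [Fin.consEquiv_apply, Fin.cons_zero, Fin.prod_univ_succ, Fin.castSucc_zero,
      Fin.cons_succ, ← Fin.succ_castSucc, ← Finset.mul_sum,
      sum_prod_markovChain n _ _ (hK 0 _) fun h => hK h.succ, mul_one, h₀]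

namespace MDPModel

variable {S A H : ℕ} (μ : MDPModel S A H) (π : Policy S A H)

theorem trajP_nonneg (t : Fin H → Fin S) : 0 ≤ μ.trajP π t := by
  unfold trajP
  refine mul_nonneg ?_ (prod_nonneg fun h _ => ?_) <;> split_ifs
  all_goals first | exact zero_le_one | exact μ.init_nonneg _ | exact μ.trans_nonneg _ _ _ _

theorem sum_trajP : ∑ t : Fin H → Fin S, μ.trajP π t = 1 := by
  cases H with
  | zero => simp [trajP]
  | succ n =>
    rw [← sum_prod_markovChain n μ.init (fun h x => μ.trans x (π x h.castSucc) h.castSucc)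
      μ.init_sum fun _ _ => μ.trans_sum _ _ _]
    refine sum_congr rfl fun t _ => ?_
    simp only [trajP, dif_pos n.succ_pos, Fin.prod_univ_castSucc, Fin.val_last, lt_irrefl,
      dite_false, mul_one, Fin.val_castSucc, add_lt_add_iff_right, Fin.is_lt, dite_true]
    rfl

theorem value_nonneg : 0 ≤ μ.value π :=
  sum_nonneg fun t _ =>
    mul_nonneg (μ.trajP_nonneg π t) (sum_nonneg fun _ _ => μ.reward_nonneg _ _ _)

theorem value_le_horizon : μ.value π ≤ H :=
  calc μ.value π ≤ ∑ t : Fin H → Fin S, μ.trajP π t * H :=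
        sum_le_sum fun t _ => mul_le_mul_of_nonneg_left
          ((sum_le_sum fun _ _ => μ.reward_le_one _ _ _).trans_eq (by simp)) (μ.trajP_nonneg π t)
    _ = H := by rw [← sum_mul, sum_trajP, one_mul]

end MDPModel

theorem mul_lt_mul_of_div_add_lt_div {a b g B : ℝ} (ha : 0 < a) (hb : 0 ≤ b) (hB : 0 ≤ B)
    (hgB : g ≤ B) (h : b / (a + b) < g / (2 * B)) : B * b < g * a := by
  have hBpos : 0 < B := hB.lt_of_ne' fun hB0 => by
    simp only [hB0, mul_zero, div_zero] at h
    exact h.not_ge (div_nonneg hb (by positivity))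
  rw [div_lt_div_iff₀ (by positivity) (by positivity)] at h
  nlinarith

section condExpOn

variable {Ω : Type*} [MeasurableSpace Ω] {P : Measure Ω} {s : Set Ω} {f : Ω → ℝ} {B : ℝ}

theorem measureReal_mul_condExpOn (hs : P.real s ≠ 0) :
    P.real s * condExpOn P s f = ∫ ω in s, f ω ∂P :=
  mul_div_cancel₀ _ hs

theorem condExpOn_nonneg (hf : ∀ ω, 0 ≤ f ω) : 0 ≤ condExpOn P s f :=
  div_nonneg (integral_nonneg hf) ENNReal.toReal_nonneg

theorem setIntegral_le_mul_measureReal [IsFiniteMeasure P] (hfs : IntegrableOn f s P)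
    (hf : ∀ ω, f ω ≤ B) : ∫ ω in s, f ω ∂P ≤ B * P.real s := by
  simpa [setIntegral_const, mul_comm] using setIntegral_mono hfs (integrableOn_const (C := B)) hf

theorem condExpOn_le [IsFiniteMeasure P] (hs : 0 < P.real s) (hfs : IntegrableOn f s P)
    (hf : ∀ ω, f ω ≤ B) : condExpOn P s f ≤ B :=
  (div_le_iff₀ hs).2 (setIntegral_le_mul_measureReal hfs hf)

theorem condExpOn_lt_condExpOn_of_gap_on_inter [IsFiniteMeasure P] {A T : Set Ω} {f' : Ω → ℝ}
    {g : ℝ} (hT : MeasurableSet T) (hfA : IntegrableOn f A P) (hf'A : IntegrableOn f' A P)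
    (hf : ∀ ω, 0 ≤ f ω) (hf' : ∀ ω, f' ω ≤ B) (hAT : 0 < P.real (A ∩ T))
    (hgap : condExpOn P (A ∩ T) f' + g ≤ condExpOn P (A ∩ T) f)
    (hB : B * P.real (A \ T) < g * P.real (A ∩ T)) :
    condExpOn P A f' < condExpOn P A f := by
  have hA : 0 < P.real A := hAT.trans_le (measureReal_mono Set.inter_subset_left)
  have h_inter (u : Ω → ℝ) : ∫ ω in A ∩ T, u ω ∂P = P.real (A ∩ T) * condExpOn P (A ∩ T) u :=
    (measureReal_mul_condExpOn hAT.ne').symm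
  have h_integral : ∫ ω in A, f' ω ∂P < ∫ ω in A, f ω ∂P :=
    calc ∫ ω in A, f' ω ∂P
        = P.real (A ∩ T) * condExpOn P (A ∩ T) f' + ∫ ω in A \ T, f' ω ∂P := by
          rw [← integral_inter_add_sdiff hT hf'A, h_inter]
      _ ≤ P.real (A ∩ T) * condExpOn P (A ∩ T) f' + B * P.real (A \ T) := by
          gcongr; exact setIntegral_le_mul_measureReal (hf'A.mono_set Set.sdiff_subset) hf'
      _ < P.real (A ∩ T) * (condExpOn P (A ∩ T) f' + g) := by linarith
      _ ≤ P.real (A ∩ T) * condExpOn P (A ∩ T) f := by gcongr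
      _ ≤ ∫ ω in A, f ω ∂P := by
          rw [← integral_inter_add_sdiff hT hfA, h_inter]
          exact le_add_of_nonneg_right (integral_nonneg hf)
  exact div_lt_div_of_pos_right h_integral hA

end condExpOn

theorem hidden_hallucination_incentive_general (S A H : ℕ)
    {Ω : Type*} [MeasurableSpace Ω] (P : MeasureTheory.Measure Ω) [IsProbabilityMeasure P]
    (μstar : Ω → MDPModel S A H)
    (hint : ∀ π : Policy S A H, Integrable (fun ω => value (μstar ω) π) P)
    (Aev : Set Ω)
    (Z : Ω → Bool) (hZmeas : Measurable Z)
    (hAZ0 : 0 < P (Aev ∩ {ω | Z ω = false}))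
    (Pi : Finset (Policy S A H)) (hne : Pi.Nonempty)
    (hcne : (Finset.univ \ Pi).Nonempty)
    (g : ℝ)
    (hgap : g ≤
      Pi.sup' hne (fun π => condExpOn P (Aev ∩ {ω | Z ω = false})
          (fun ω => value (μstar ω) π)) -
        (Finset.univ \ Pi).sup' hcne (fun π => condExpOn P (Aev ∩ {ω | Z ω = false})
          (fun ω => value (μstar ω) π)))
    (hp : (P ({ω | Z ω = true} ∩ Aev)).toReal / (P Aev).toReal < g / (2 * (H : ℝ))) :
    ∀ π0 : Policy S A H,
      (∀ π : Policy S A H, condExpOn P Aev (fun ω => value (μstar ω) π) ≤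
        condExpOn P Aev (fun ω => value (μstar ω) π0)) →
      π0 ∈ Pi := by
  intro π0 hmax
  set T := {ω | Z ω = false}
  set M := fun π => condExpOn P (Aev ∩ T) (fun ω => value (μstar ω) π)
  have hT : MeasurableSet T := hZmeas (measurableSet_singleton false)
  have hAT : 0 < P.real (Aev ∩ T) := ENNReal.toReal_pos hAZ0.ne' (measure_ne_top _ _)
  obtain ⟨πm, -, hπm⟩ := exists_mem_eq_sup' hne M
  by_contra hπ0
  have hgap' : M π0 + g ≤ M πm := by
    linarith [le_sup' M (mem_sdiff.2 ⟨mem_univ _, hπ0⟩)]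
  have hgH : g ≤ H := by
    linarith [condExpOn_nonneg (P := P) (s := Aev ∩ T) fun ω => (μstar ω).value_nonneg π0,
      condExpOn_le hAT (hint πm).integrableOn fun ω => (μstar ω).value_le_horizon πm]
  have hZ_true : {ω | Z ω = true} ∩ Aev = Aev \ T := by ext; simp [T, and_comm]
  rw [hZ_true, ← measureReal_def, ← measureReal_def,
    ← measureReal_inter_add_sdiff (s := Aev) hT] at hp
  exact (hmax πm).not_gt <| condExpOn_lt_condExpOn_of_gap_on_inter hT (hint πm).integrableOn
    (hint π0).integrableOn (fun ω => (μstar ω).value_nonneg πm)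
    (fun ω => (μstar ω).value_le_horizon π0) hAT hgap'
    (mul_lt_mul_of_div_add_lt_div hAT measureReal_nonneg H.cast_nonneg hgH hp)

/-- **Hidden-hallucination incentive step.** Let `μ*` be a random MDP model on a probability
space, `A` an event with `P(A) > 0`, `Z` a `{0,1}`-valued (Boolean) random variable with
`P(A ∩ {Z = 0}) > 0`, and `p := P(Z = 1 | A)`. Let `Π` be a nonempty proper subset of the set
of all policies, and suppose `g > 0` satisfies
`max_{π∈Π} E[V(π,μ*) | A, Z=0] − max_{π∉Π} E[V(π,μ*) | A, Z=0] ≥ g`.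
If `p < g/(2H)`, then every maximizer of `π ↦ E[V(π,μ*) | A]` lies in `Π`. -/
theorem hidden_hallucination_incentive (S A H : ℕ)
    {Ω : Type*} [MeasurableSpace Ω] (P : MeasureTheory.Measure Ω) [IsProbabilityMeasure P]
    (μstar : Ω → MDPModel S A H)
    (hint : ∀ π : Policy S A H, Integrable (fun ω => value (μstar ω) π) P)
    (Aev : Set Ω) (hAmeas : MeasurableSet Aev) (hApos : 0 < P Aev)
    (Z : Ω → Bool) (hZmeas : Measurable Z)
    (hAZ0 : 0 < P (Aev ∩ {ω | Z ω = false}))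
    (Pi : Finset (Policy S A H)) (hne : Pi.Nonempty)
    (hcne : (Finset.univ \ Pi).Nonempty)
    (g : ℝ) (hg : 0 < g)
    (hgap : g ≤
      Pi.sup' hne (fun π => condExpOn P (Aev ∩ {ω | Z ω = false})
          (fun ω => value (μstar ω) π)) -
        (Finset.univ \ Pi).sup' hcne (fun π => condExpOn P (Aev ∩ {ω | Z ω = false})
          (fun ω => value (μstar ω) π)))
    (hp : (P ({ω | Z ω = true} ∩ Aev)).toReal / (P Aev).toReal < g / (2 * (H : ℝ))) :
    ∀ π0 : Policy S A H,
      (∀ π : Policy S A H, condExpOn P Aev (fun ω => value (μstar ω) π) ≤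
        condExpOn P Aev (fun ω => value (μstar ω) π0)) →
      π0 ∈ Pi :=
  hidden_hallucination_incentive_general S A H P μstar hint Aev Z hZmeas hAZ0 Pi hne hcne g hgap hp
end
end

section
/- ℓ1 concentration of the empirical distribution: let p be a probability distribution on a finite set of size S, let X_1,…,X_n be independent samples from p, and let p̂ be the empirical distribution p̂(x) := (1/n)·#{i : X_i = x}. Then for every δ ∈ (0,1), with probability at least 1 − δ, ‖p̂ − p‖_{ℓ1} ≤ 2·√(2(S·log 5 + log(1/δ))/n). -/
/-!
For a sign vector `s : α → {-1, 0, 1}`, the sum `∑ i, (s (X i) - E s) = n ⟪s, p̂ - p⟫` has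
independent centred summands with values in an interval of length 2, so Hoeffding's inequality
bounds the probability that it exceeds `n t` by `exp (-n t² / 2)`. Choosing `s = sign (p̂ - p)`
turns the sum into `n ‖p̂ - p‖₁`, hence a union bound over the `3 ^ S` sign vectors controls the
ℓ1 deviation; at the radius of the statement, `3 ^ S * exp (-4 (S log 5 + log (1/δ))) ≤ δ`.
-/

open MeasureTheory ProbabilityTheory Finset

lemma measureReal_sum_sub_integral_ge_le_pi {ι Ω : Type*} [Fintype ι] [MeasurableSpace Ω]
    (μ : Measure Ω) [IsProbabilityMeasure μ] {f : Ω → ℝ} (hf : Measurable f) {a b : ℝ}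
    (hfab : ∀ x, f x ∈ Set.Icc a b) {ε : ℝ} (hε : 0 ≤ ε) :
    (Measure.pi fun _ : ι => μ).real {ω | ε ≤ ∑ i, (f (ω i) - ∫ x, f x ∂μ)} ≤
      Real.exp (-2 * ε ^ 2 / (Fintype.card ι * (b - a) ^ 2)) := by
  have hsub : HasSubgaussianMGF (fun x => f x - ∫ x, f x ∂μ) ((‖b - a‖₊ / 2) ^ 2) μ :=
    hasSubgaussianMGF_of_mem_Icc hf.aemeasurable (ae_of_all _ hfab)
  have hsub_pi : ∀ i, HasSubgaussianMGF (fun ω : ι → Ω => f (ω i) - ∫ x, f x ∂μ)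
      ((‖b - a‖₊ / 2) ^ 2) (Measure.pi fun _ : ι => μ) := fun i =>
    HasSubgaussianMGF.of_map (Y := Function.eval i) (measurable_pi_apply i).aemeasurable
      (by rwa [(measurePreserving_eval (fun _ : ι => μ) i).map_eq])
  have h := HasSubgaussianMGF.measure_sum_ge_le_of_iIndepFun
    (iIndepFun_pi (X := fun _ x => f x - ∫ x, f x ∂μ) fun _ => by fun_prop)
    (s := univ) (fun i _ => hsub_pi i) hε
  convert h using 2
  simp only [sum_const, card_univ, nsmul_eq_mul, NNReal.coe_mul, NNReal.coe_natCast,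
    NNReal.coe_pow, NNReal.coe_div, coe_nnnorm, Real.norm_eq_abs, NNReal.coe_ofNat]
  rw [div_pow, sq_abs, show (2 : ℝ) * (Fintype.card ι * ((b - a) ^ 2 / 2 ^ 2))
    = Fintype.card ι * (b - a) ^ 2 / 2 by ring, div_div_eq_mul_div]
  ring

section Empirical

variable {ι α : Type*} [Fintype ι]

open Classical in
noncomputable def empiricalFreq (ω : ι → α) (x : α) : ℝ :=
  #{i | ω i = x} / Fintype.card ι

open Classical in
lemma card_mul_empiricalFreq (ω : ι → α) (x : α) :
    Fintype.card ι * empiricalFreq ω x = #{i | ω i = x} := by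
  rcases isEmpty_or_nonempty ι with hι | hι
  · simp
  · exact mul_div_cancel₀ _ (by positivity)

lemma sum_comp_eq_card_mul_sum_empiricalFreq [Fintype α] (ω : ι → α) (g : α → ℝ) :
    ∑ i, g (ω i) = Fintype.card ι * ∑ x, empiricalFreq ω x * g x := by
  classical
  rw [← sum_fiberwise univ ω, mul_sum]
  refine sum_congr rfl fun x _ => ?_
  rw [← mul_assoc, card_mul_empiricalFreq, ← nsmul_eq_mul, ← sum_const]
  exact sum_congr rfl fun i hi => by rw [(mem_filter.1 hi).2]

variable [Fintype α] [MeasurableSpace α] [MeasurableSingletonClass α]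

lemma sum_sub_integral_eq_card_mul_sum (μ : Measure α) [IsFiniteMeasure μ]
    (ω : ι → α) (g : α → ℝ) :
    ∑ i, (g (ω i) - ∫ x, g x ∂μ) =
      Fintype.card ι * ∑ x, (empiricalFreq ω x - μ.real {x}) * g x := by
  rw [sum_sub_distrib, sum_comp_eq_card_mul_sum_empiricalFreq, integral_fintype .of_finite,
    sum_const, card_univ, nsmul_eq_mul, ← mul_sub, ← sum_sub_distrib]
  simp only [smul_eq_mul, sub_mul]

lemma measureReal_l1_dist_empiricalFreq_gt_le (μ : Measure α) [IsProbabilityMeasure μ]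
    {t : ℝ} (ht : 0 ≤ t) :
    (Measure.pi fun _ : ι => μ).real {ω | t < ∑ x, |empiricalFreq ω x - μ.real {x}|} ≤
      3 ^ Fintype.card α * Real.exp (-(Fintype.card ι * t ^ 2 / 2)) := by
  classical
  set n : ℝ := (Fintype.card ι : ℝ)
  have hcover : {ω : ι → α | t < ∑ x, |empiricalFreq ω x - μ.real {x}|} ⊆
      ⋃ s : α → SignType, {ω | n * t ≤ ∑ i, ((s (ω i) : ℝ) - ∫ x, (s x : ℝ) ∂μ)} := by
    intro ω hω
    refine Set.mem_iUnion.2 ⟨fun x => SignType.sign (empiricalFreq ω x - μ.real {x}), ?_⟩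
    rw [Set.mem_ofPred_eq, sum_sub_integral_eq_card_mul_sum μ ω
      (fun x => (SignType.sign (empiricalFreq ω x - μ.real {x}) : ℝ))]
    simp only [self_mul_sign]
    exact mul_le_mul_of_nonneg_left hω.le (Nat.cast_nonneg _)
  have hsign : ∀ (s : α → SignType) x, (s x : ℝ) ∈ Set.Icc (-1) 1 := fun s x => by
    cases s x <;> norm_num
  have hexp : Real.exp (-2 * (n * t) ^ 2 / (n * (1 - -1) ^ 2)) = Real.exp (-(n * t ^ 2 / 2)) := by
    rcases eq_or_ne n 0 with hn | hn
    · simp [hn]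
    · congr 1; field_simp; ring
  calc _ ≤ _ := measureReal_mono hcover
    _ ≤ ∑ s : α → SignType, (Measure.pi fun _ : ι => μ).real
          {ω | n * t ≤ ∑ i, ((s (ω i) : ℝ) - ∫ x, (s x : ℝ) ∂μ)} := measureReal_iUnion_fintype_le _
    _ ≤ ∑ _s : α → SignType, Real.exp (-(n * t ^ 2 / 2)) := sum_le_sum fun s _ =>
          hexp ▸ measureReal_sum_sub_integral_ge_le_pi μ (measurable_of_finite _) (hsign s)
            (by positivity)
    _ = _ := by
      rw [sum_const, card_univ, Fintype.card_fun, show Fintype.card SignType = 3 from rfl,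
        nsmul_eq_mul]
      norm_num

end Empirical

lemma pow_mul_exp_neg_log_le {a b δ : ℝ} (S : ℕ) (ha : 0 < a) (hab : a ≤ b) (hδ : 0 < δ) :
    a ^ S * Real.exp (-(S * Real.log b + Real.log (1 / δ))) ≤ δ := by
  have hb : 0 < b := ha.trans_le hab
  have hexp : Real.exp (-(S * Real.log b + Real.log (1 / δ))) = δ / b ^ S := by
    rw [← Real.log_pow, ← Real.log_mul (by positivity) (by positivity), Real.exp_neg,
      Real.exp_log (by positivity)]
    field_simp
  rw [hexp, mul_div_assoc', div_le_iff₀ (by positivity), mul_comm]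
  exact mul_le_mul_of_nonneg_left (pow_le_pow_left₀ ha.le hab S) hδ.le

lemma ofReal_one_sub_le_measure_setOf_le {Ω : Type*} [MeasurableSpace Ω] (μ : Measure Ω)
    [IsProbabilityMeasure μ] {f : Ω → ℝ} (hf : Measurable f) {t δ : ℝ}
    (h : μ.real {ω | t < f ω} ≤ δ) :
    ENNReal.ofReal (1 - δ) ≤ μ {ω | f ω ≤ t} := by
  have hcompl : {ω | f ω ≤ t} = {ω | t < f ω}ᶜ := by ext; simp
  rw [ENNReal.ofReal_le_iff_le_toReal (measure_ne_top _ _), ← measureReal_def, hcompl,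
    probReal_compl_eq_one_sub (measurableSet_lt measurable_const hf)]
  linarith

open Classical in
/-- **ℓ1 concentration of the empirical distribution.** Let `p` be a probability distribution
on a finite set of size `S` (formalized as a probability measure `μp` on a fintype `α` of
cardinality `S`) and let `X_1,…,X_n` be i.i.d. samples from `p` (formalized by the product
measure on `Fin n → α`). Then for every `δ ∈ (0,1)`, with probability at least `1 − δ`,
`‖p̂ − p‖₁ ≤ 2·√(2(S·log 5 + log(1/δ))/n)`, where `p̂` is the empirical distribution. -/
theorem empirical_l1_concentration {α : Type*} [Fintype α] [MeasurableSpace α]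
    [MeasurableSingletonClass α]
    (S n : ℕ) (hcard : Fintype.card α = S) (hn : 0 < n)
    (μp : Measure α) [IsProbabilityMeasure μp]
    (δ : ℝ) (hδ0 : 0 < δ) (hδ1 : δ < 1) :
    ENNReal.ofReal (1 - δ) ≤
      Measure.pi (fun _ : Fin n => μp)
        {ω : Fin n → α |
          ∑ x : α, |((Finset.univ.filter fun i : Fin n => ω i = x).card : ℝ) / (n : ℝ)
              - (μp {x}).toReal|
            ≤ 2 * Real.sqrt (2 * ((S : ℝ) * Real.log 5 + Real.log (1 / δ)) / (n : ℝ))} := by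
  set C := (S : ℝ) * Real.log 5 + Real.log (1 / δ)
  have hC : 0 ≤ C := by
    have : 0 < Real.log (1 / δ) := Real.log_pos ((one_lt_div hδ0).2 hδ1)
    positivity
  have hrate : (n : ℝ) * (2 * Real.sqrt (2 * C / n)) ^ 2 / 2 = 4 * C := by
    have hn' : (n : ℝ) ≠ 0 := Nat.cast_ne_zero.2 hn.ne'
    rw [mul_pow, Real.sq_sqrt (by positivity)]
    field_simp
    ring
  have htail := measureReal_l1_dist_empiricalFreq_gt_le (ι := Fin n) μp
    (t := 2 * Real.sqrt (2 * C / n)) (by positivity)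
  rw [Fintype.card_fin, hrate, hcard] at htail
  have hδ : 3 ^ S * Real.exp (-(4 * C)) ≤ δ := by
    have := pow_mul_exp_neg_log_le S (by norm_num : (0 : ℝ) < 3) (by norm_num : (3 : ℝ) ≤ 5) hδ0
    calc _ ≤ 3 ^ S * Real.exp (-C) := by gcongr; linarith
      _ ≤ δ := this
  have := ofReal_one_sub_le_measure_setOf_le _ (measurable_of_finite _) (htail.trans hδ)
  simpa only [empiricalFreq, Fintype.card_fin, measureReal_def] using this
end

section
/- Logarithm inversion: for all positive reals a, b, t with a/b ≥ e, if t ≥ 2·log(a/b)/b, then b ≥ log(a·t)/t. -/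
/-- **Logarithm inversion.** For all positive reals `a, b, t` with `a/b ≥ e`:
if `t ≥ 2·log(a/b)/b`, then `b ≥ log(a·t)/t`. -/
theorem log_inversion (a b t : ℝ) (ha : 0 < a) (hb : 0 < b) (ht : 0 < t)
    (hab : Real.exp 1 ≤ a / b) (h : 2 * Real.log (a / b) / b ≤ t) :
    Real.log (a * t) / t ≤ b := by
  rw [div_le_iff₀ ht]
  have hbt : 0 < b * t := mul_pos hb ht
  have hsplit : Real.log (a * t) = Real.log (a / b) + Real.log (b * t) := by
    rw [← Real.log_mul (by positivity) (ne_of_gt hbt)]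
    congr 1
    field_simp
  have hL : Real.log (a / b) ≤ b * t / 2 := by
    rw [div_le_iff₀ hb] at h
    linarith
  have hlog_bt : Real.log (b * t) ≤ b * t / Real.exp 1 := by
    have h1 : Real.log (b * t / Real.exp 1) ≤ b * t / Real.exp 1 - 1 :=
      Real.log_le_sub_one_of_pos (by positivity)
    have h2 : Real.log (b * t / Real.exp 1) = Real.log (b * t) - 1 := by
      rw [Real.log_div (ne_of_gt hbt) (Real.exp_ne_zero 1), Real.log_exp]
    linarith
  have he : (2:ℝ) ≤ Real.exp 1 := by
    have := Real.add_one_le_exp 1; linarith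
  have : b * t / Real.exp 1 ≤ b * t / 2 :=
    div_le_div_of_nonneg_left hbt.le (by norm_num) he
  linarith [hsplit]
end
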